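/- Strict subharmonicity of the normalized trace of the squared resolvent. Let A ∈ ℂ^{N×N} and define f_A(z) := ⟨((A−z)(A−z)*)^{-1}⟩ on the resolvent set {z ∈ ℂ : A−z is invertible}. Then f_A is smooth there, and viewing z = x + iy ∈ ℝ², one has ∂_z ∂_{z̄} f_A(z) = ⟨ (A−z)^{-2} · ((A−z)^{-2})* ⟩, equivalently Δf_A(z) = 4·⟨ (A−z)^{-2} · ((A−z)^{-2})* ⟩, where Δ = ∂²/∂x² + ∂²/∂y². In particular Δf_A(z) > 0 for every z in the resolvent set, i.e. f_A is strictly subharmonic on the resolvent set of A. -/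

import Mathlib

open MeasureTheory ProbabilityTheory Matrix Polynomial
open scoped ComplexOrder NNReal ENNReal

noncomputable section

/-- The Hermitization `[[0, B], [Bᴴ, 0]]` of an `N × N` complex matrix `B`. -/
def hermitize {N : ℕ} (B : Matrix (Fin N) (Fin N) ℂ) :
    Matrix (Fin N ⊕ Fin N) (Fin N ⊕ Fin N) ℂ :=
  Matrix.fromBlocks 0 B Bᴴ 0

/-- Normalized trace `⟨M⟩ = d⁻¹ Tr M`. -/
def ntrace {ι : Type} [Fintype ι] (M : Matrix ι ι ℂ) : ℂ :=
  M.trace / (Fintype.card ι : ℂ)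

/-- `|B|² = Bᴴ B`. -/
def absSq {N : ℕ} (B : Matrix (Fin N) (Fin N) ℂ) : Matrix (Fin N) (Fin N) ℂ :=
  Bᴴ * B

/-- The (matrix) imaginary part `Im M = (M - Mᴴ)/(2i)`. -/
def imPart {ι : Type} [Fintype ι] (M : Matrix ι ι ℂ) : Matrix ι ι ℂ :=
  (2 * Complex.I)⁻¹ • (M - Mᴴ)

/-- The `ℓ² → ℓ²` operator norm of a matrix. -/
def opNorm {ι : Type} [Fintype ι] [DecidableEq ι] (M : Matrix ι ι ℂ) : ℝ :=
  ‖LinearMap.toContinuousLinearMap (Matrix.toEuclideanLin M)‖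

/-- `M` is a solution of the matrix Dyson equation
`-M⁻¹ = -H_𝒜 + ẑ·I + ⟨M⟩·I` with positive definite imaginary part. -/
def IsMDESolution {N : ℕ} (𝒜 : Matrix (Fin N) (Fin N) ℂ) (zhat : ℂ)
    (M : Matrix (Fin N ⊕ Fin N) (Fin N ⊕ Fin N) ℂ) : Prop :=
  IsUnit M.det ∧ (imPart M).PosDef ∧
    M⁻¹ = hermitize 𝒜 - zhat • (1 : Matrix (Fin N ⊕ Fin N) (Fin N ⊕ Fin N) ℂ) - ntrace M • 1

/-- A choice of solution of the matrix Dyson equation. -/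
def mdeSol {N : ℕ} (𝒜 : Matrix (Fin N) (Fin N) ℂ) (zhat : ℂ) :
    Matrix (Fin N ⊕ Fin N) (Fin N ⊕ Fin N) ℂ :=
  Classical.epsilon fun M => IsMDESolution 𝒜 zhat M

/-- Partial derivative in the real direction. -/
def pdx (F : ℂ → ℝ) (z : ℂ) : ℝ := deriv (fun s : ℝ => F (z + (s : ℂ))) 0

/-- Partial derivative in the imaginary direction. -/
def pdy (F : ℂ → ℝ) (z : ℂ) : ℝ := deriv (fun s : ℝ => F (z + (s : ℂ) * Complex.I)) 0

/-- The Laplacian `Δ = ∂²/∂x² + ∂²/∂y²` on `ℂ ≅ ℝ²`. -/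
def cLap (F : ℂ → ℝ) (z : ℂ) : ℝ := pdx (pdx F) z + pdy (pdy F) z

/-- Partial derivative in the real direction, complex-valued version. -/
def pdxC (F : ℂ → ℂ) (z : ℂ) : ℂ := deriv (fun s : ℝ => F (z + (s : ℂ))) 0

/-- Partial derivative in the imaginary direction, complex-valued version. -/
def pdyC (F : ℂ → ℂ) (z : ℂ) : ℂ := deriv (fun s : ℝ => F (z + (s : ℂ) * Complex.I)) 0

/-- The Laplacian on `ℂ`, complex-valued version. -/
def cLapC (F : ℂ → ℂ) (z : ℂ) : ℂ := pdxC (pdxC F) z + pdyC (pdyC F) z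

/-- Wirtinger derivative `∂_z = (∂_x - i ∂_y)/2`. -/
def wirtDz (F : ℂ → ℂ) (z : ℂ) : ℂ := (pdxC F z - Complex.I * pdyC F z) / 2

/-- Wirtinger derivative `∂_z̄ = (∂_x + i ∂_y)/2`. -/
def wirtDzBar (F : ℂ → ℂ) (z : ℂ) : ℂ := (pdxC F z + Complex.I * pdyC F z) / 2

/-- Laplacian in the `j`-th coordinate of a function of `k` complex variables. -/
def lapCoord {k : ℕ} (j : Fin k) (F : (Fin k → ℂ) → ℂ) (w : Fin k → ℂ) : ℂ :=
  cLapC (fun z => F (Function.update w j z)) (w j)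

/-- The composition `Δ_{w₁} ⋯ Δ_{w_k}` of the coordinatewise Laplacians. -/
def multiLap {k : ℕ} (F : (Fin k → ℂ) → ℂ) : (Fin k → ℂ) → ℂ :=
  (List.finRange k).foldr (fun j G => lapCoord j G) F

/-- Resolvent of the Hermitization of `Y` at the spectral parameter `iη`. -/
def resolv {N : ℕ} (Y : Matrix (Fin N) (Fin N) ℂ) (η : ℝ) :
    Matrix (Fin N ⊕ Fin N) (Fin N ⊕ Fin N) ℂ :=
  (hermitize Y - ((η : ℂ) * Complex.I) • 1)⁻¹

/-- `X` is an IID random matrix (real if `isReal`, complex if not) with moment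
constants `cp`. -/
def IsIIDEntries {N : ℕ} {Ω : Type} [MeasurableSpace Ω] (μ : Measure Ω)
    (X : Ω → Matrix (Fin N) (Fin N) ℂ) (cp : ℕ → ℝ) (isReal : Bool) : Prop :=
  (∀ i j, Measurable fun ω => X ω i j) ∧
  iIndepFun
    (fun p : Fin N × Fin N => fun ω => X ω p.1 p.2) μ ∧
  (∀ i j, ∫ ω, X ω i j ∂μ = 0) ∧
  (∀ i j, ∫ ω, ‖X ω i j‖ ^ 2 ∂μ = 1 / N) ∧
  (if isReal then ∀ ω i j, (X ω i j).im = 0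
    else ∀ i j, ∫ ω, (X ω i j) ^ 2 ∂μ = 0) ∧
  (∀ p : ℕ, ∀ i j, ∫ ω, (Real.sqrt N * ‖X ω i j‖) ^ p ∂μ ≤ cp p)

/-- The law of a centered complex Gaussian whose real and imaginary parts are
independent real Gaussians of variance `v`. -/
def complexGaussian (v : ℝ≥0) : Measure ℂ :=
  Measure.map (fun p : ℝ × ℝ => (p.1 : ℂ) + (p.2 : ℂ) * Complex.I)
    ((gaussianReal 0 v).prod (gaussianReal 0 v))

/-- `X` is a Ginibre random matrix (real if `isReal`, complex if not). -/
def IsGinibre {N : ℕ} {Ω : Type} [MeasurableSpace Ω] (μ : Measure Ω)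
    (X : Ω → Matrix (Fin N) (Fin N) ℂ) (isReal : Bool) : Prop :=
  (∀ i j, Measurable fun ω => X ω i j) ∧
  iIndepFun
    (fun p : Fin N × Fin N => fun ω => X ω p.1 p.2) μ ∧
  (∀ i j, Measure.map (fun ω => X ω i j) μ =
    if isReal then Measure.map (fun x : ℝ => (x : ℂ)) (gaussianReal 0 (N : ℝ≥0)⁻¹)
    else complexGaussian ((2 * N : ℝ≥0))⁻¹)

/-- The domain `D_C` of regular sharp-edge candidates. -/
def edgeDomain {N : ℕ} (A : Matrix (Fin N) (Fin N) ℂ) (C : ℝ) : Set ℂ :=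
  {z | IsUnit (A - z • 1).det ∧ opNorm ((A - z • 1)⁻¹) < C ∧
    1 / C < (1 + ‖z‖) ^ 3 *
      ‖ntrace ((absSq (A - z • 1))⁻¹ * (absSq (A - z • 1))⁻¹ * (A - z • 1))‖}

/-- `I₃ = ⟨|B|⁻⁴ B*⟩`. -/
def I3m {N : ℕ} (B : Matrix (Fin N) (Fin N) ℂ) : ℂ :=
  ntrace ((absSq B)⁻¹ * (absSq B)⁻¹ * Bᴴ)

/-- `I₄ = ⟨|B|⁻⁴⟩`. -/
def I4m {N : ℕ} (B : Matrix (Fin N) (Fin N) ℂ) : ℂ :=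
  ntrace ((absSq B)⁻¹ * (absSq B)⁻¹)

/-- The rescaling parameter `γ₀ = -I₄^{-1/2} I₃`. -/
def gamma0 {N : ℕ} (B : Matrix (Fin N) (Fin N) ℂ) : ℂ :=
  -((((I4m B).re ^ (-(1/2 : ℝ)) : ℝ) : ℂ) * I3m B)

/-- The rescaling parameter `c₀ = I₄^{-1/4}`. -/
def cScale {N : ℕ} (B : Matrix (Fin N) (Fin N) ℂ) : ℝ :=
  (I4m B).re ^ (-(1/4 : ℝ))

/-- The sharp-edge assumption (Assumption 2.5 of the paper) for the pair `(A, z₀)`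
over the field `𝔽` (`isReal = true` for `𝔽 = ℝ`). -/
def SharpEdge {N : ℕ} (A : Matrix (Fin N) (Fin N) ℂ) (z₀ : ℂ)
    (C₁ C₂ 𝔠 : ℝ) (isReal : Bool) : Prop :=
  ntrace ((absSq (A - z₀ • 1))⁻¹) = 1 ∧ z₀ ∈ edgeDomain A C₁ ∧
  (if isReal then
    ((((N : ℝ) ^ (-(1/2 : ℝ) + 𝔠) ≤ |z₀.im|) →
        ¬ Bornology.IsBounded
          (connectedComponentIn (edgeDomain A C₂ ∩ {z : ℂ | z.im ≠ 0}) z₀)) ∧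
     ((|z₀.im| ≤ (N : ℝ) ^ (-(1/2 : ℝ) + 𝔠)) →
        ¬ Bornology.IsBounded
          (connectedComponentIn {x : ℝ | (x : ℂ) ∈ edgeDomain A C₂} z₀.re)))
  else
    ¬ Bornology.IsBounded (connectedComponentIn (edgeDomain A C₂) z₀))

/-- The eigenvalues of `B`, with algebraic multiplicity, as a list. -/
def eigList {N : ℕ} (B : Matrix (Fin N) (Fin N) ℂ) : List ℂ :=
  (Matrix.charpoly B).roots.toList

/-- The sum of `F(φ(σ_{i₁}), …, φ(σ_{i_k}))` over all `k`-tuples of pairwise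
distinct indices, where `σ₁, …, σ_N` are the eigenvalues of `B` with multiplicity. -/
def kPointSum {k N : ℕ} (F : (Fin k → ℂ) → ℂ) (φ : ℂ → ℂ)
    (B : Matrix (Fin N) (Fin N) ℂ) : ℂ :=
  ∑ f ∈ Finset.univ.filter (fun f : Fin k → Fin N => Function.Injective f),
    F fun j => φ ((eigList B).getD ((f j : ℕ)) 0)

/-- The regularized log-determinant statistic
`2N ∫_η^∞ Im[⟨(H_Y - iu)⁻¹⟩ - ⟨M_𝒜(iu)⟩] du`. -/
def Lstat {N : ℕ} (Y 𝒜 : Matrix (Fin N) (Fin N) ℂ) (η : ℝ) : ℝ :=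
  2 * N * ∫ u in Set.Ioi η,
    ((ntrace (resolv Y u)).im - (ntrace (mdeSol 𝒜 ((u : ℂ) * Complex.I))).im)

/-- The regularized smallest-singular-value statistic `⟨η(|Y|² + η²)⁻¹⟩`. -/
def Nstat {N : ℕ} (Y : Matrix (Fin N) (Fin N) ℂ) (η : ℝ) : ℝ :=
  (ntrace ((η : ℂ) • (absSq Y + ((η : ℂ) ^ 2) • 1)⁻¹)).re

/-- The path assumption (Assumption 4.4 of the paper) with constant `C₅`:
a piecewise `C¹` path of deformations keeping the origin a sharp edge. -/
def PathAssumption {N : ℕ} (𝒜 : ℝ → Matrix (Fin N) (Fin N) ℂ)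
    (A₀ : Matrix (Fin N) (Fin N) ℂ) (z₁ : ℂ) (C₅ : ℝ) : Prop :=
  (∀ i j, ContinuousOn (fun t => 𝒜 t i j) (Set.Icc 0 1)) ∧
  𝒜 0 = A₀ ∧ 𝒜 1 = (-z₁) • 1 ∧ ‖z₁‖ = 1 ∧
  (∀ t ∈ Set.Icc (0 : ℝ) 1, ntrace ((absSq (𝒜 t))⁻¹) = 1) ∧
  ∃ T : Finset ℝ, ∀ t ∈ Set.Icc (0 : ℝ) 1, t ∉ T →
    (∀ i j, DifferentiableAt ℝ (fun s => 𝒜 s i j) t) ∧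
    IsUnit (𝒜 t).det ∧
    opNorm (𝒜 t) ≤ C₅ ∧ opNorm ((𝒜 t)⁻¹) ≤ C₅ ∧
    C₅⁻¹ ≤ ‖ntrace (𝒜 t * ((absSq (𝒜 t))⁻¹ * (absSq (𝒜 t))⁻¹))‖ ∧
    ‖ntrace (𝒜 t * ((absSq (𝒜 t))⁻¹ * (absSq (𝒜 t))⁻¹))‖ ≤ C₅ ∧
    opNorm (Matrix.of fun i j => deriv (fun s => 𝒜 s i j) t) ≤ C₅ * Real.log N

/-- `θ_t = 1 - ⟨(𝒜_t 𝒜_tᵀ)⁻¹⟩` along a path of deformations. -/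
def thetaPath {N : ℕ} (𝒜 : ℝ → Matrix (Fin N) (Fin N) ℂ) (t : ℝ) : ℂ :=
  1 - ntrace ((𝒜 t * (𝒜 t)ᵀ)⁻¹)

/-- `ζ(w) = z₀ + γ₀⁻¹ N^{-1/2} w`. -/
def zetaPt {N : ℕ} (A : Matrix (Fin N) (Fin N) ℂ) (z₀ : ℂ) (w : ℂ) : ℂ :=
  z₀ + (gamma0 (A - z₀ • 1))⁻¹ * ((((Real.sqrt (N : ℝ))⁻¹ : ℝ)) : ℂ) * w

/-- `η₁ = N^{-3/4-δ}`. -/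
def eta1 (N : ℕ) (δ : ℝ) : ℝ := (N : ℝ) ^ (-(3/4 : ℝ) - δ)

/-- `η₀ = c₀⁻¹ η₁`. -/
def eta0 {N : ℕ} (A : Matrix (Fin N) (Fin N) ℂ) (z₀ : ℂ) (δ : ℝ) : ℝ :=
  (cScale (A - z₀ • 1))⁻¹ * eta1 N δ

/-- The regularized log-determinant `L₀(w)` for the realization `Xm` of the
IID matrix, i.e. `Tr log(|A+Xm-ζ(w)|²+η₀²)` minus its deterministic counterpart,
written via the integral representation of the resolvent trace. -/
def L0stat {N : ℕ} (A Xm : Matrix (Fin N) (Fin N) ℂ) (z₀ : ℂ) (δ : ℝ) (w : ℂ) : ℝ :=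
  Lstat (A + Xm - zetaPt A z₀ w • 1) (A - zetaPt A z₀ w • 1) (eta0 A z₀ δ)

/-- The regularized log-determinant `L₁^{Gin}(w)` for the realization `Xm`
of the Ginibre matrix. -/
def L1stat {N : ℕ} (Xm : Matrix (Fin N) (Fin N) ℂ) (z₁ : ℂ) (δ : ℝ) (w : ℂ) : ℝ :=
  Lstat (Xm - (z₁ + z₁ * ((((Real.sqrt (N : ℝ))⁻¹ : ℝ)) : ℂ) * w) • 1)
    ((-(z₁ + z₁ * ((((Real.sqrt (N : ℝ))⁻¹ : ℝ)) : ℂ) * w)) • 1) (eta1 N δ)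

/-- The regularized smallest-singular-value statistic
`N₀(w) = c₀⁻¹ ⟨η₀ (|A+Xm-ζ(w)|²+η₀²)⁻¹⟩`. -/
def N0stat {N : ℕ} (A Xm : Matrix (Fin N) (Fin N) ℂ) (z₀ : ℂ) (δ : ℝ) (w : ℂ) : ℝ :=
  (cScale (A - z₀ • 1))⁻¹ * Nstat (A + Xm - zetaPt A z₀ w • 1) (eta0 A z₀ δ)

/-- The regularized smallest-singular-value statistic
`N₁^{Gin}(w) = ⟨η₁ (|Xm-z₁-z₁N^{-1/2}w|²+η₁²)⁻¹⟩`. -/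
def N1stat {N : ℕ} (Xm : Matrix (Fin N) (Fin N) ℂ) (z₁ : ℂ) (δ : ℝ) (w : ℂ) : ℝ :=
  Nstat (Xm - (z₁ + z₁ * ((((Real.sqrt (N : ℝ))⁻¹ : ℝ)) : ℂ) * w) • 1) (eta1 N δ)

section SubharmonicAux

open Complex Finset

namespace Subharm

variable {N : ℕ}

/-- Openness of the resolvent set (proved before enabling matrix norm instances,
so the `Pi` topology is used). -/
lemma isOpen_resSet (A : Matrix (Fin N) (Fin N) ℂ) :
    IsOpen {z : ℂ | IsUnit (A - z • (1 : Matrix (Fin N) (Fin N) ℂ)).det} := by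
  have hcont : Continuous fun z : ℂ => (A - z • (1 : Matrix (Fin N) (Fin N) ℂ)).det :=
    Continuous.matrix_det (continuous_const.sub (continuous_id.smul continuous_const))
  have : {z : ℂ | IsUnit (A - z • (1 : Matrix (Fin N) (Fin N) ℂ)).det}
      = (fun z : ℂ => (A - z • (1 : Matrix (Fin N) (Fin N) ℂ)).det) ⁻¹' {(0 : ℂ)}ᶜ := by
    ext w; simp [isUnit_iff_ne_zero]
  rw [this]
  exact isOpen_compl_singleton.preimage hcont

attribute [local instance] Matrix.linftyOpNormedRing Matrix.linftyOpNormedAlgebra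

def eCLM (i j : Fin N) : Matrix (Fin N) (Fin N) ℂ →L[ℂ] ℂ :=
  LinearMap.toContinuousLinearMap (Matrix.entryLinearMap ℂ ℂ i j)

lemma entryD {M : ℂ → Matrix (Fin N) (Fin N) ℂ} {M' : Matrix (Fin N) (Fin N) ℂ}
    {z : ℂ} (h : HasDerivAt M M' z) (i j : Fin N) :
    HasDerivAt (fun u => M u i j) (M' i j) z := by
  have := ((eCLM i j).hasFDerivAt (x := M z)).comp_hasDerivAt z h
  exact this

def Rm (A : Matrix (Fin N) (Fin N) ℂ) (u : ℂ) : Matrix (Fin N) (Fin N) ℂ :=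
  (A - u • 1)⁻¹

def Sm (A : Matrix (Fin N) (Fin N) ℂ) (u : ℂ) : Matrix (Fin N) (Fin N) ℂ :=
  Rm A u * Rm A u

def Tm (A : Matrix (Fin N) (Fin N) ℂ) (u : ℂ) : Matrix (Fin N) (Fin N) ℂ :=
  Sm A u * Rm A u + Rm A u * Sm A u

lemma hasDerivAt_B (A : Matrix (Fin N) (Fin N) ℂ) (z : ℂ) :
    HasDerivAt (fun u : ℂ => A - u • (1 : Matrix (Fin N) (Fin N) ℂ)) (-1) z := by
  have h1 : HasDerivAt (fun u : ℂ => u • (1 : Matrix (Fin N) (Fin N) ℂ))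
      ((1 : ℂ) • (1 : Matrix (Fin N) (Fin N) ℂ)) z := (hasDerivAt_id z).smul_const 1
  have h2 := (hasDerivAt_const z A).fun_sub h1
  simp at h2
  exact h2

lemma hasDerivAt_Rm (A : Matrix (Fin N) (Fin N) ℂ) {z : ℂ}
    (hz : IsUnit (A - z • 1).det) : HasDerivAt (Rm A) (Sm A z) z := by
  obtain ⟨u, hu'⟩ := (Matrix.isUnit_iff_isUnit_det _).2 hz
  have hinv : HasFDerivAt (𝕜 := ℂ) Ring.inverse
      (-ContinuousLinearMap.mulLeftRight ℂ _ (↑u⁻¹) (↑u⁻¹)) (A - z • 1) :=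
    hu' ▸ hasFDerivAt_ringInverse (𝕜 := ℂ) u
  have h2 : HasDerivAt (fun w : ℂ => Ring.inverse (A - w • (1 : Matrix (Fin N) (Fin N) ℂ)))
      ((-ContinuousLinearMap.mulLeftRight ℂ _ (↑u⁻¹) (↑u⁻¹)) (-1)) z :=
    by have h3 := hinv.comp_hasDerivAt z (hasDerivAt_B A z); exact h3
  have hfun : Rm A = fun w : ℂ => Ring.inverse (A - w • 1) :=
    funext fun w => Matrix.nonsing_inv_eq_ringInverse _
  have hval : (↑u⁻¹ : Matrix (Fin N) (Fin N) ℂ) = Rm A z := by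
    rw [Matrix.coe_units_inv, hu']; rfl
  rw [hfun]
  convert h2 using 1
  simp [Sm, hval, ContinuousLinearMap.mulLeftRight_apply]

lemma hasDerivAt_Sm (A : Matrix (Fin N) (Fin N) ℂ) {z : ℂ}
    (hz : IsUnit (A - z • 1).det) : HasDerivAt (Sm A) (Tm A z) z := by
  have := (hasDerivAt_Rm A hz).fun_mul (hasDerivAt_Rm A hz)
  have e : Tm A z = Rm A z * Rm A z * Rm A z + Rm A z * (Rm A z * Rm A z) := by
    simp [Tm, Sm]
  rw [e]
  exact this

end Subharm
end SubharmonicAux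

section Dev2
open Complex Finset
namespace Subharm
variable {N : ℕ}

lemma lineD {F : ℂ → ℂ} {F' : ℂ} {z : ℂ} (e : ℂ) (h : HasDerivAt F F' z) :
    HasDerivAt (fun s : ℝ => F (z + s * e)) (e * F') 0 := by
  have h1 : HasDerivAt (fun s : ℝ => z + (s : ℂ) * e) e 0 := by
    simpa using ((Complex.ofRealCLM.hasDerivAt (x := (0 : ℝ))).mul_const e).const_add z
  have h2 := h.scomp_of_eq (x := (0:ℝ)) h1 (by simp)
  simpa [smul_eq_mul, mul_comm, Function.comp_def] using h2

lemma sumProdLineD (c e z : ℂ) (a b : Fin N × Fin N → ℂ → ℂ) (a' b' : Fin N × Fin N → ℂ)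
    (ha : ∀ p, HasDerivAt (a p) (a' p) z) (hb : ∀ p, HasDerivAt (b p) (b' p) z) :
    HasDerivAt (fun s : ℝ => c * ∑ p : Fin N × Fin N,
        a p (z + s * e) * (starRingEnd ℂ) (b p (z + s * e)))
      (c * ∑ p : Fin N × Fin N,
        (e * a' p * (starRingEnd ℂ) (b p z) + a p z * (starRingEnd ℂ) (e * b' p))) 0 := by
  apply HasDerivAt.const_mul
  apply HasDerivAt.fun_sum
  intro p _
  have h1 := lineD e (ha p)
  have h2 := (lineD e (hb p)).star
  have h3 := h1.fun_mul h2
  simp only [starRingEnd_apply]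
  convert h3 using 1
  · rfl
  · simp

lemma sumProdLineD_re (c e z : ℂ) (a b : Fin N × Fin N → ℂ → ℂ) (a' b' : Fin N × Fin N → ℂ)
    (ha : ∀ p, HasDerivAt (a p) (a' p) z) (hb : ∀ p, HasDerivAt (b p) (b' p) z) :
    HasDerivAt (fun s : ℝ => (c * ∑ p : Fin N × Fin N,
        a p (z + s * e) * (starRingEnd ℂ) (b p (z + s * e))).re)
      ((c * ∑ p : Fin N × Fin N,
        (e * a' p * (starRingEnd ℂ) (b p z) + a p z * (starRingEnd ℂ) (e * b' p))).re) 0 :=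
  Complex.reCLM.hasFDerivAt.comp_hasDerivAt 0 (sumProdLineD c e z a b a' b' ha hb)

lemma eventually_line {U : Set ℂ} (hU : IsOpen U) {v : ℂ} (hv : v ∈ U) (e : ℂ) :
    ∀ᶠ s : ℝ in nhds 0, v + (s : ℂ) * e ∈ U := by
  have hcont : Continuous fun s : ℝ => v + (s : ℂ) * e := by continuity
  have h0 : v + ((0 : ℝ) : ℂ) * e ∈ U := by simpa using hv
  exact hcont.continuousAt.preimage_mem_nhds (hU.mem_nhds h0)

lemma deriv_congr_line {E : Type*} [NormedAddCommGroup E] [NormedSpace ℝ E]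
    {Φ Ψ : ℂ → E} {U : Set ℂ} (hU : IsOpen U) {v : ℂ} (hv : v ∈ U)
    (hΦΨ : ∀ w ∈ U, Φ w = Ψ w) (e : ℂ) :
    deriv (fun s : ℝ => Φ (v + s * e)) 0 = deriv (fun s : ℝ => Ψ (v + s * e)) 0 := by
  apply Filter.EventuallyEq.deriv_eq
  filter_upwards [eventually_line hU hv e] with s hs
  exact hΦΨ _ hs

end Subharm
end Dev2

section Dev3
open Complex Finset
namespace Subharm
variable {N : ℕ}

lemma hform (A : Matrix (Fin N) (Fin N) ℂ) (u : ℂ) :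
    ntrace (((A - u • 1) * (A - u • 1)ᴴ)⁻¹)
      = (N : ℂ)⁻¹ * ∑ p : Fin N × Fin N,
          Rm A u p.1 p.2 * (starRingEnd ℂ) (Rm A u p.1 p.2) := by
  unfold ntrace Rm
  rw [Matrix.mul_inv_rev, ← Matrix.conjTranspose_nonsing_inv]
  simp only [Matrix.trace, Matrix.diag_apply, Matrix.mul_apply, Matrix.conjTranspose_apply,
    Fintype.card_fin, Fintype.sum_prod_type]
  rw [div_eq_inv_mul]
  congr 1
  rw [Finset.sum_comm]
  exact Finset.sum_congr rfl fun i _ => Finset.sum_congr rfl fun j _ => mul_comm _ _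

lemma ntrace_SSH (A : Matrix (Fin N) (Fin N) ℂ) (z : ℂ) :
    ntrace (((A - z • 1)⁻¹ * (A - z • 1)⁻¹) * ((A - z • 1)⁻¹ * (A - z • 1)⁻¹)ᴴ)
      = (N : ℂ)⁻¹ * ∑ p : Fin N × Fin N,
          Sm A z p.1 p.2 * (starRingEnd ℂ) (Sm A z p.1 p.2) := by
  unfold ntrace Sm Rm
  simp only [Matrix.trace, Matrix.diag_apply, Matrix.mul_apply, Matrix.conjTranspose_apply,
    Fintype.card_fin, Fintype.sum_prod_type]
  rw [div_eq_inv_mul]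
  simp only [starRingEnd_apply]

lemma hform_real (A : Matrix (Fin N) (Fin N) ℂ) (u : ℂ) :
    ntrace (((A - u • 1) * (A - u • 1)ᴴ)⁻¹)
      = ((((N : ℝ)⁻¹ * ∑ p : Fin N × Fin N, Complex.normSq (Rm A u p.1 p.2) : ℝ)) : ℂ) := by
  rw [hform A u]
  push_cast
  congr 1
  rw [← Finset.sum_attach Finset.univ fun p : Fin N × Fin N =>
    (Complex.normSq (Rm A u p.1 p.2) : ℂ)]
  rw [← Finset.sum_attach Finset.univ fun p : Fin N × Fin N =>
    Rm A u p.1 p.2 * (starRingEnd ℂ) (Rm A u p.1 p.2)]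
  exact Finset.sum_congr rfl fun p _ => (Complex.mul_conj _).symm ▸ rfl

lemma f_eq_real (A : Matrix (Fin N) (Fin N) ℂ) (u : ℂ) :
    (ntrace (((A - u • 1) * (A - u • 1)ᴴ)⁻¹)).re
      = (N : ℝ)⁻¹ * ∑ p : Fin N × Fin N, Complex.normSq (Rm A u p.1 p.2) := by
  rw [hform_real A u, Complex.ofReal_re]

lemma F_eq (A : Matrix (Fin N) (Fin N) ℂ) (u : ℂ) :
    (((ntrace (((A - u • 1) * (A - u • 1)ᴴ)⁻¹)).re : ℝ) : ℂ)
      = (N : ℂ)⁻¹ * ∑ p : Fin N × Fin N,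
          Rm A u p.1 p.2 * (starRingEnd ℂ) (Rm A u p.1 p.2) := by
  rw [f_eq_real A u, ← hform A u, hform_real A u]

end Subharm
end Dev3

section Dev4
open Complex Finset
namespace Subharm
variable {N : ℕ}

lemma conj2 (A : Matrix (Fin N) (Fin N) ℂ) {z : ℂ} (hz : IsUnit (A - z • 1).det) :
    wirtDz (fun v => wirtDzBar
        (fun u => (((ntrace (((A - u • 1) * (A - u • 1)ᴴ)⁻¹)).re : ℝ) : ℂ)) v) z
      = ntrace (((A - z • 1)⁻¹ * (A - z • 1)⁻¹)
          * ((A - z • 1)⁻¹ * (A - z • 1)⁻¹)ᴴ) := by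
  have hU := isOpen_resSet A
  have hF : (fun u : ℂ => (((ntrace (((A - u • 1) * (A - u • 1)ᴴ)⁻¹)).re : ℝ) : ℂ))
      = fun u => (N : ℂ)⁻¹ * ∑ p : Fin N × Fin N,
          Rm A u p.1 p.2 * (starRingEnd ℂ) (Rm A u p.1 p.2) := funext fun u => F_eq A u
  have hWbar : ∀ v : ℂ, IsUnit (A - v • (1 : Matrix (Fin N) (Fin N) ℂ)).det →
      wirtDzBar (fun u => (((ntrace (((A - u • 1) * (A - u • 1)ᴴ)⁻¹)).re : ℝ) : ℂ)) v
        = (N : ℂ)⁻¹ * ∑ p : Fin N × Fin N,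
            Rm A v p.1 p.2 * (starRingEnd ℂ) (Sm A v p.1 p.2) := by
    intro v hv
    have key : ∀ e : ℂ,
        deriv (fun s : ℝ => (N : ℂ)⁻¹ * ∑ p : Fin N × Fin N,
          Rm A (v + s * e) p.1 p.2 * (starRingEnd ℂ) (Rm A (v + s * e) p.1 p.2)) 0
        = (N : ℂ)⁻¹ * ∑ p : Fin N × Fin N,
            (e * Sm A v p.1 p.2 * (starRingEnd ℂ) (Rm A v p.1 p.2)
              + Rm A v p.1 p.2 * (starRingEnd ℂ) (e * Sm A v p.1 p.2)) := fun e =>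
      (sumProdLineD _ e v _ _ _ _
        (fun p => entryD (hasDerivAt_Rm A hv) p.1 p.2)
        (fun p => entryD (hasDerivAt_Rm A hv) p.1 p.2)).deriv
    unfold wirtDzBar pdxC pdyC
    rw [hF]
    have e1 : (fun s : ℝ => (N : ℂ)⁻¹ * ∑ p : Fin N × Fin N,
        Rm A (v + (s : ℂ)) p.1 p.2 * (starRingEnd ℂ) (Rm A (v + (s : ℂ)) p.1 p.2))
        = fun s : ℝ => (N : ℂ)⁻¹ * ∑ p : Fin N × Fin N,
        Rm A (v + (s : ℂ) * 1) p.1 p.2 * (starRingEnd ℂ) (Rm A (v + (s : ℂ) * 1) p.1 p.2) := by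
      funext s; rw [mul_one]
    rw [e1, key 1, key Complex.I]
    simp only [Finset.mul_sum]
    rw [← Finset.sum_add_distrib, Finset.sum_div]
    refine Finset.sum_congr rfl fun p _ => ?_
    simp only [one_mul, _root_.map_mul, Complex.conj_I]
    set a := Rm A v p.1 p.2
    set b := Sm A v p.1 p.2
    linear_combination ((N : ℂ)⁻¹ * (b * (starRingEnd ℂ) a - a * (starRingEnd ℂ) b) / 2)
      * Complex.I_mul_I
  have houter : ∀ e : ℂ,
      deriv (fun s : ℝ => wirtDzBar
        (fun u => (((ntrace (((A - u • 1) * (A - u • 1)ᴴ)⁻¹)).re : ℝ) : ℂ)) (z + s * e)) 0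
      = (N : ℂ)⁻¹ * ∑ p : Fin N × Fin N,
          (e * Sm A z p.1 p.2 * (starRingEnd ℂ) (Sm A z p.1 p.2)
            + Rm A z p.1 p.2 * (starRingEnd ℂ) (e * Tm A z p.1 p.2)) := by
    intro e
    rw [deriv_congr_line hU hz hWbar e]
    exact (sumProdLineD _ e z _ _ _ _
      (fun p => entryD (hasDerivAt_Rm A hz) p.1 p.2)
      (fun p => entryD (hasDerivAt_Sm A hz) p.1 p.2)).deriv
  unfold wirtDz pdxC pdyC
  have e1 : (fun s : ℝ => wirtDzBar
      (fun u => (((ntrace (((A - u • 1) * (A - u • 1)ᴴ)⁻¹)).re : ℝ) : ℂ)) (z + (s : ℂ)))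
      = fun s : ℝ => wirtDzBar
      (fun u => (((ntrace (((A - u • 1) * (A - u • 1)ᴴ)⁻¹)).re : ℝ) : ℂ)) (z + (s : ℂ) * 1) := by
    funext s; rw [mul_one]
  rw [e1, houter 1, houter Complex.I, ntrace_SSH]
  simp only [Finset.mul_sum]
  rw [← Finset.sum_sub_distrib, Finset.sum_div]
  refine Finset.sum_congr rfl fun p _ => ?_
  simp only [one_mul, _root_.map_mul, Complex.conj_I]
  set a := Rm A z p.1 p.2
  set b := Sm A z p.1 p.2
  set t := Tm A z p.1 p.2
  linear_combination ((N : ℂ)⁻¹ * (a * (starRingEnd ℂ) t - b * (starRingEnd ℂ) b) / 2)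
    * Complex.I_mul_I

end Subharm
end Dev4

section Dev5
open Complex Finset
namespace Subharm
variable {N : ℕ}

lemma conj3 (A : Matrix (Fin N) (Fin N) ℂ) {z : ℂ} (hz : IsUnit (A - z • 1).det) :
    cLap (fun u => (ntrace (((A - u • 1) * (A - u • 1)ᴴ)⁻¹)).re) z
      = 4 * (ntrace (((A - z • 1)⁻¹ * (A - z • 1)⁻¹)
          * ((A - z • 1)⁻¹ * (A - z • 1)⁻¹)ᴴ)).re := by
  have hU := isOpen_resSet A
  -- first derivative along direction e at any point of the resolvent set
  have hD1 : ∀ (e : ℂ) (v : ℂ), IsUnit (A - v • (1 : Matrix (Fin N) (Fin N) ℂ)).det →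
      deriv (fun s : ℝ =>
        (ntrace (((A - (v + (s:ℂ) * e) • 1) * (A - (v + (s:ℂ) * e) • 1)ᴴ)⁻¹)).re) 0
        = ((N : ℂ)⁻¹ * ∑ p : Fin N × Fin N,
            (e * Sm A v p.1 p.2) * (starRingEnd ℂ) (Rm A v p.1 p.2)).re
          + ((N : ℂ)⁻¹ * ∑ p : Fin N × Fin N,
            Rm A v p.1 p.2 * (starRingEnd ℂ) (e * Sm A v p.1 p.2)).re := by
    intro e v hv
    have hfun : (fun s : ℝ =>
        (ntrace (((A - (v + (s:ℂ) * e) • 1) * (A - (v + (s:ℂ) * e) • 1)ᴴ)⁻¹)).re)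
        = fun s : ℝ => ((N : ℂ)⁻¹ * ∑ p : Fin N × Fin N,
            Rm A (v + (s:ℂ) * e) p.1 p.2
              * (starRingEnd ℂ) (Rm A (v + (s:ℂ) * e) p.1 p.2)).re :=
      funext fun s => congrArg Complex.re (hform A _)
    rw [hfun, (sumProdLineD_re _ e v _ _ _ _
        (fun p => entryD (hasDerivAt_Rm A hv) p.1 p.2)
        (fun p => entryD (hasDerivAt_Rm A hv) p.1 p.2)).deriv]
    rw [← Complex.add_re, ← mul_add, ← Finset.sum_add_distrib]
  -- the first partial derivatives on the resolvent set
  have hpdx : ∀ v : ℂ, IsUnit (A - v • (1 : Matrix (Fin N) (Fin N) ℂ)).det →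
      pdx (fun u => (ntrace (((A - u • 1) * (A - u • 1)ᴴ)⁻¹)).re) v
        = ((N : ℂ)⁻¹ * ∑ p : Fin N × Fin N,
            ((1:ℂ) * Sm A v p.1 p.2) * (starRingEnd ℂ) (Rm A v p.1 p.2)).re
          + ((N : ℂ)⁻¹ * ∑ p : Fin N × Fin N,
            Rm A v p.1 p.2 * (starRingEnd ℂ) ((1:ℂ) * Sm A v p.1 p.2)).re := by
    intro v hv
    show deriv (fun s : ℝ =>
        (ntrace (((A - (v + (s:ℂ)) • 1) * (A - (v + (s:ℂ)) • 1)ᴴ)⁻¹)).re) 0 = _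
    have e1 : (fun s : ℝ =>
        (ntrace (((A - (v + (s:ℂ)) • 1) * (A - (v + (s:ℂ)) • 1)ᴴ)⁻¹)).re)
        = fun s : ℝ =>
        (ntrace (((A - (v + (s:ℂ) * 1) • 1) * (A - (v + (s:ℂ) * 1) • 1)ᴴ)⁻¹)).re := by
      funext s; rw [mul_one]
    rw [e1]
    exact hD1 1 v hv
  have hpdy : ∀ v : ℂ, IsUnit (A - v • (1 : Matrix (Fin N) (Fin N) ℂ)).det →
      pdy (fun u => (ntrace (((A - u • 1) * (A - u • 1)ᴴ)⁻¹)).re) v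
        = ((N : ℂ)⁻¹ * ∑ p : Fin N × Fin N,
            (Complex.I * Sm A v p.1 p.2) * (starRingEnd ℂ) (Rm A v p.1 p.2)).re
          + ((N : ℂ)⁻¹ * ∑ p : Fin N × Fin N,
            Rm A v p.1 p.2 * (starRingEnd ℂ) (Complex.I * Sm A v p.1 p.2)).re :=
    fun v hv => hD1 Complex.I v hv
  -- second derivative computation
  have hDD : ∀ e e' : ℂ,
      deriv (fun s : ℝ =>
        ((N : ℂ)⁻¹ * ∑ p : Fin N × Fin N,
            (e * Sm A (z + (s:ℂ) * e') p.1 p.2)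
              * (starRingEnd ℂ) (Rm A (z + (s:ℂ) * e') p.1 p.2)).re
          + ((N : ℂ)⁻¹ * ∑ p : Fin N × Fin N,
            Rm A (z + (s:ℂ) * e') p.1 p.2
              * (starRingEnd ℂ) (e * Sm A (z + (s:ℂ) * e') p.1 p.2)).re) 0
      = ((N : ℂ)⁻¹ * ∑ p : Fin N × Fin N,
          (e' * (e * Tm A z p.1 p.2) * (starRingEnd ℂ) (Rm A z p.1 p.2)
            + (e * Sm A z p.1 p.2) * (starRingEnd ℂ) (e' * Sm A z p.1 p.2))).re
        + ((N : ℂ)⁻¹ * ∑ p : Fin N × Fin N,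
          (e' * Sm A z p.1 p.2 * (starRingEnd ℂ) (e * Sm A z p.1 p.2)
            + Rm A z p.1 p.2 * (starRingEnd ℂ) (e' * (e * Tm A z p.1 p.2)))).re := by
    intro e e'
    exact ((sumProdLineD_re ((N : ℂ)⁻¹) e' z
        (fun p v => e * Sm A v p.1 p.2) (fun p v => Rm A v p.1 p.2)
        (fun p => e * Tm A z p.1 p.2) (fun p => Sm A z p.1 p.2)
        (fun p => (entryD (hasDerivAt_Sm A hz) p.1 p.2).const_mul e)
        (fun p => entryD (hasDerivAt_Rm A hz) p.1 p.2)).add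
      (sumProdLineD_re ((N : ℂ)⁻¹) e' z
        (fun p v => Rm A v p.1 p.2) (fun p v => e * Sm A v p.1 p.2)
        (fun p => Sm A z p.1 p.2) (fun p => e * Tm A z p.1 p.2)
        (fun p => entryD (hasDerivAt_Rm A hz) p.1 p.2)
        (fun p => (entryD (hasDerivAt_Sm A hz) p.1 p.2).const_mul e))).deriv
  have hx : pdx (pdx (fun u => (ntrace (((A - u • 1) * (A - u • 1)ᴴ)⁻¹)).re)) z
      = ((N : ℂ)⁻¹ * ∑ p : Fin N × Fin N,
          ((1:ℂ) * ((1:ℂ) * Tm A z p.1 p.2) * (starRingEnd ℂ) (Rm A z p.1 p.2)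
            + ((1:ℂ) * Sm A z p.1 p.2) * (starRingEnd ℂ) ((1:ℂ) * Sm A z p.1 p.2))).re
        + ((N : ℂ)⁻¹ * ∑ p : Fin N × Fin N,
          ((1:ℂ) * Sm A z p.1 p.2 * (starRingEnd ℂ) ((1:ℂ) * Sm A z p.1 p.2)
            + Rm A z p.1 p.2 * (starRingEnd ℂ) ((1:ℂ) * ((1:ℂ) * Tm A z p.1 p.2)))).re := by
    show deriv (fun s : ℝ =>
        pdx (fun u => (ntrace (((A - u • 1) * (A - u • 1)ᴴ)⁻¹)).re) (z + (s:ℂ))) 0 = _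
    have e1 : (fun s : ℝ =>
        pdx (fun u => (ntrace (((A - u • 1) * (A - u • 1)ᴴ)⁻¹)).re) (z + (s:ℂ)))
        = fun s : ℝ =>
        pdx (fun u => (ntrace (((A - u • 1) * (A - u • 1)ᴴ)⁻¹)).re) (z + (s:ℂ) * 1) := by
      funext s; rw [mul_one]
    rw [e1, deriv_congr_line hU hz hpdx 1]
    exact hDD 1 1
  have hy : pdy (pdy (fun u => (ntrace (((A - u • 1) * (A - u • 1)ᴴ)⁻¹)).re)) z
      = ((N : ℂ)⁻¹ * ∑ p : Fin N × Fin N,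
          (Complex.I * (Complex.I * Tm A z p.1 p.2) * (starRingEnd ℂ) (Rm A z p.1 p.2)
            + (Complex.I * Sm A z p.1 p.2)
              * (starRingEnd ℂ) (Complex.I * Sm A z p.1 p.2))).re
        + ((N : ℂ)⁻¹ * ∑ p : Fin N × Fin N,
          (Complex.I * Sm A z p.1 p.2 * (starRingEnd ℂ) (Complex.I * Sm A z p.1 p.2)
            + Rm A z p.1 p.2
              * (starRingEnd ℂ) (Complex.I * (Complex.I * Tm A z p.1 p.2)))).re := by
    show deriv (fun s : ℝ =>
        pdy (fun u => (ntrace (((A - u • 1) * (A - u • 1)ᴴ)⁻¹)).re)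
          (z + (s:ℂ) * Complex.I)) 0 = _
    rw [deriv_congr_line hU hz hpdy Complex.I]
    exact hDD Complex.I Complex.I
  unfold cLap
  rw [hx, hy]
  rw [← Complex.add_re, ← Complex.add_re, ← Complex.add_re]
  have hkey : (((N : ℂ)⁻¹ * ∑ p : Fin N × Fin N,
          ((1:ℂ) * ((1:ℂ) * Tm A z p.1 p.2) * (starRingEnd ℂ) (Rm A z p.1 p.2)
            + ((1:ℂ) * Sm A z p.1 p.2) * (starRingEnd ℂ) ((1:ℂ) * Sm A z p.1 p.2)))
        + ((N : ℂ)⁻¹ * ∑ p : Fin N × Fin N,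
          ((1:ℂ) * Sm A z p.1 p.2 * (starRingEnd ℂ) ((1:ℂ) * Sm A z p.1 p.2)
            + Rm A z p.1 p.2 * (starRingEnd ℂ) ((1:ℂ) * ((1:ℂ) * Tm A z p.1 p.2))))
        + (((N : ℂ)⁻¹ * ∑ p : Fin N × Fin N,
          (Complex.I * (Complex.I * Tm A z p.1 p.2) * (starRingEnd ℂ) (Rm A z p.1 p.2)
            + (Complex.I * Sm A z p.1 p.2)
              * (starRingEnd ℂ) (Complex.I * Sm A z p.1 p.2)))
        + ((N : ℂ)⁻¹ * ∑ p : Fin N × Fin N,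
          (Complex.I * Sm A z p.1 p.2 * (starRingEnd ℂ) (Complex.I * Sm A z p.1 p.2)
            + Rm A z p.1 p.2
              * (starRingEnd ℂ) (Complex.I * (Complex.I * Tm A z p.1 p.2))))))
      = 4 * ntrace (((A - z • 1)⁻¹ * (A - z • 1)⁻¹)
          * ((A - z • 1)⁻¹ * (A - z • 1)⁻¹)ᴴ) := by
    rw [ntrace_SSH]
    simp only [Finset.mul_sum]
    rw [← Finset.sum_add_distrib, ← Finset.sum_add_distrib, ← Finset.sum_add_distrib]
    refine Finset.sum_congr rfl fun p _ => ?_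
    simp only [one_mul, _root_.map_mul, Complex.conj_I]
    set a := Rm A z p.1 p.2
    set b := Sm A z p.1 p.2
    set t := Tm A z p.1 p.2
    linear_combination ((N : ℂ)⁻¹ * (t * (starRingEnd ℂ) a + a * (starRingEnd ℂ) t
      - 2 * (b * (starRingEnd ℂ) b))) * Complex.I_mul_I
  rw [hkey]
  simp

end Subharm
end Dev5

section Dev6
open Complex Finset
namespace Subharm
attribute [local instance] Matrix.linftyOpNormedRing Matrix.linftyOpNormedAlgebra
variable {N : ℕ}

lemma normSq_contDiff : ContDiff ℝ (⊤ : ℕ∞) (fun w : ℂ => Complex.normSq w) := by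
  have h : ContDiff ℝ (⊤ : ℕ∞) fun w : ℂ =>
      Complex.reCLM w * Complex.reCLM w + Complex.imCLM w * Complex.imCLM w :=
    (Complex.reCLM.contDiff.mul Complex.reCLM.contDiff).add
      (Complex.imCLM.contDiff.mul Complex.imCLM.contDiff)
  have heq : (fun w : ℂ => Complex.normSq w)
      = fun w : ℂ => Complex.reCLM w * Complex.reCLM w + Complex.imCLM w * Complex.imCLM w :=
    funext fun w => Complex.normSq_apply w
  rw [heq]
  exact h

lemma conj1 (A : Matrix (Fin N) (Fin N) ℂ) :
    ContDiffOn ℝ (⊤ : ℕ∞) (fun z : ℂ => (ntrace (((A - z • 1) * (A - z • 1)ᴴ)⁻¹)).re)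
      {z : ℂ | IsUnit (A - z • (1 : Matrix (Fin N) (Fin N) ℂ)).det} := by
  have hnice : ∀ z ∈ {z : ℂ | IsUnit (A - z • (1 : Matrix (Fin N) (Fin N) ℂ)).det},
      ContDiffAt ℝ (⊤ : ℕ∞) (fun w : ℂ => (N : ℝ)⁻¹
        * ∑ p : Fin N × Fin N, Complex.normSq (Rm A w p.1 p.2)) z := by
    intro z hz
    have hz' : IsUnit (A - z • (1 : Matrix (Fin N) (Fin N) ℂ)).det := hz
    obtain ⟨u, hu⟩ := (Matrix.isUnit_iff_isUnit_det _).2 hz'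
    have hB : ContDiffAt ℂ ⊤ (fun w : ℂ => A - w • (1 : Matrix (Fin N) (Fin N) ℂ)) z :=
      (contDiff_const.sub (contDiff_id.smul contDiff_const)).contDiffAt
    have hinv : ContDiffAt ℂ ⊤
        (Ring.inverse : Matrix (Fin N) (Fin N) ℂ → Matrix (Fin N) (Fin N) ℂ) (A - z • 1) :=
      hu ▸ contDiffAt_ringInverse ℂ u
    have hR : ContDiffAt ℂ ⊤ (Rm A) z := by
      have hcomp := hinv.comp z hB
      have hfun : Rm A = fun w : ℂ => Ring.inverse (A - w • 1) :=
        funext fun w => Matrix.nonsing_inv_eq_ringInverse _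
      rw [hfun]; exact hcomp
    refine contDiffAt_const.mul (ContDiffAt.sum fun p _ => ?_)
    have heq : (fun w : ℂ => Complex.normSq (Rm A w p.1 p.2))
        = (fun w : ℂ => Complex.normSq w) ∘ (⇑(eCLM p.1 p.2) ∘ Rm A) := by
      funext w; simp [eCLM, Function.comp]
    rw [heq]
    exact normSq_contDiff.comp_contDiffAt z
      ((((eCLM p.1 p.2).contDiff.comp_contDiffAt z hR).restrict_scalars ℝ).of_le le_top)
  exact ContDiffOn.congr (fun z hz => (hnice z hz).contDiffWithinAt)
    fun z hz => f_eq_real A z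

lemma SSH_real (A : Matrix (Fin N) (Fin N) ℂ) (z : ℂ) :
    (ntrace (((A - z • 1)⁻¹ * (A - z • 1)⁻¹)
        * ((A - z • 1)⁻¹ * (A - z • 1)⁻¹)ᴴ)).re
      = (N : ℝ)⁻¹ * ∑ p : Fin N × Fin N, Complex.normSq (Sm A z p.1 p.2) := by
  have h1 : ntrace (((A - z • 1)⁻¹ * (A - z • 1)⁻¹)
        * ((A - z • 1)⁻¹ * (A - z • 1)⁻¹)ᴴ)
      = ((((N : ℝ)⁻¹ * ∑ p : Fin N × Fin N, Complex.normSq (Sm A z p.1 p.2) : ℝ)) : ℂ) := by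
    rw [ntrace_SSH]
    push_cast
    congr 1
    rw [← Finset.sum_attach Finset.univ fun p : Fin N × Fin N =>
      (Complex.normSq (Sm A z p.1 p.2) : ℂ)]
    rw [← Finset.sum_attach Finset.univ fun p : Fin N × Fin N =>
      Sm A z p.1 p.2 * (starRingEnd ℂ) (Sm A z p.1 p.2)]
    exact Finset.sum_congr rfl fun p _ => (Complex.mul_conj _).symm ▸ rfl
  rw [h1, Complex.ofReal_re]

lemma pos4 (A : Matrix (Fin N) (Fin N) ℂ) (hN : 1 ≤ N) {z : ℂ}
    (hz : IsUnit (A - z • 1).det) :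
    0 < (ntrace (((A - z • 1)⁻¹ * (A - z • 1)⁻¹)
        * ((A - z • 1)⁻¹ * (A - z • 1)⁻¹)ᴴ)).re := by
  have hne : Nonempty (Fin N) := ⟨⟨0, hN⟩⟩
  have hRdet : IsUnit ((A - z • (1 : Matrix (Fin N) (Fin N) ℂ))⁻¹).det :=
    Matrix.isUnit_nonsing_inv_det _ hz
  have hSdet : IsUnit (Sm A z).det := by
    rw [Sm, Rm, Matrix.det_mul]
    exact hRdet.mul hRdet
  have hS0 : Sm A z ≠ 0 := by
    intro h0
    rw [h0, Matrix.det_zero] at hSdet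
    exact hSdet.ne_zero rfl
  have hex : ∃ p : Fin N × Fin N, Sm A z p.1 p.2 ≠ 0 := by
    by_contra h
    push_neg at h
    exact hS0 (Matrix.ext fun i j => h (i, j))
  obtain ⟨p, hp⟩ := hex
  rw [SSH_real A z]
  refine mul_pos (by positivity) ?_
  refine Finset.sum_pos' (fun q _ => Complex.normSq_nonneg _)
    ⟨p, Finset.mem_univ p, Complex.normSq_pos.2 hp⟩

end Subharm
end Dev6


/-- **Strict subharmonicity of the normalized trace of the squared resolvent.** -/
theorem f_strictly_subharmonic (N : ℕ) (hN : 1 ≤ N) (A : Matrix (Fin N) (Fin N) ℂ) :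
    ContDiffOn ℝ (⊤ : ℕ∞) (fun z : ℂ => (ntrace (((A - z • 1) * (A - z • 1)ᴴ)⁻¹)).re)
      {z : ℂ | IsUnit (A - z • 1).det} ∧
    (∀ z : ℂ, IsUnit (A - z • 1).det →
      wirtDz (fun v => wirtDzBar
          (fun u => (((ntrace (((A - u • 1) * (A - u • 1)ᴴ)⁻¹)).re : ℝ) : ℂ)) v) z
        = ntrace (((A - z • 1)⁻¹ * (A - z • 1)⁻¹)
            * ((A - z • 1)⁻¹ * (A - z • 1)⁻¹)ᴴ)) ∧
    (∀ z : ℂ, IsUnit (A - z • 1).det →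
      cLap (fun u => (ntrace (((A - u • 1) * (A - u • 1)ᴴ)⁻¹)).re) z
        = 4 * (ntrace (((A - z • 1)⁻¹ * (A - z • 1)⁻¹)
            * ((A - z • 1)⁻¹ * (A - z • 1)⁻¹)ᴴ)).re) ∧
    (∀ z : ℂ, IsUnit (A - z • 1).det →
      0 < cLap (fun u => (ntrace (((A - u • 1) * (A - u • 1)ᴴ)⁻¹)).re) z) := by
  refine ⟨Subharm.conj1 A, fun z hz => Subharm.conj2 A hz,
    fun z hz => Subharm.conj3 A hz, fun z hz => ?_⟩
  rw [Subharm.conj3 A hz]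
  have := Subharm.pos4 A hN hz
  linarith
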